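/- arXiv:2010.03964 — 2 statements merged into one kernel-verified Lean document; each statement's English description precedes it below -/
import Mathlib

section
/- Let g be differentiable on [a,b] with |g'(z)| ≤ M for all z in [a,b]. Then |∫_a^b g(z)dz − (b−a)(g(a)+g(b))/2| ≤ M(b−a)²/4 − (g(b)−g(a))²/(4M). -/
/-!
On `[a, b]` the function `g` is `M`-Lipschitz, so it lies below the tent
`min (g a + M (z - a)) (g b + M (b - z))`, whose peak sits at
`c = (a + b) / 2 + (g b - g a) / (2 M)`. Integrating the tent gives the upper bound;
the lower bound is the upper bound for `-g`.
-/

open Set intervalIntegral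

lemma integral_add_mul_sub_left (p q u M : ℝ) :
    ∫ z in p..q, (u + M * (z - p)) = u * (q - p) + M * (q - p) ^ 2 / 2 := by
  rw [integral_add (by simp) (by simp), integral_const_mul,
    integral_comp_sub_right (fun x => x)]
  simp only [integral_const, integral_id, smul_eq_mul]
  ring

lemma integral_add_mul_sub_right (p q u M : ℝ) :
    ∫ z in p..q, (u + M * (q - z)) = u * (q - p) + M * (q - p) ^ 2 / 2 := by
  rw [integral_add (by simp)
      ((by fun_prop : Continuous fun z => M * (q - z)).intervalIntegrable _ _),
    integral_const_mul, integral_comp_sub_left (fun x => x)]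
  simp only [integral_const, integral_id, smul_eq_mul]
  ring

lemma integral_le_of_le_tent {a b M : ℝ} {g : ℝ → ℝ} (hab : a ≤ b) (hM : 0 < M)
    (hg : ContinuousOn g (Icc a b))
    (hleft : ∀ z ∈ Icc a b, g z ≤ g a + M * (z - a))
    (hright : ∀ z ∈ Icc a b, g z ≤ g b + M * (b - z)) :
    ∫ z in a..b, g z ≤
      (b - a) * (g a + g b) / 2 + (M * (b - a) ^ 2 / 4 - (g b - g a) ^ 2 / (4 * M)) := by
  set c := (a + b) / 2 + (g b - g a) / (2 * M) with hc
  have hgb := hleft b ⟨hab, le_rfl⟩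
  have hga := hright a ⟨le_rfl, hab⟩
  have hac : a ≤ c := by
    have : -((b - a) / 2) ≤ (g b - g a) / (2 * M) := by
      rw [le_div_iff₀ (by positivity)]; linarith
    linarith
  have hcb : c ≤ b := by
    have : (g b - g a) / (2 * M) ≤ (b - a) / 2 := by
      rw [div_le_iff₀ (by positivity)]; linarith
    linarith
  have hg_int : ∀ p q, a ≤ p → p ≤ q → q ≤ b →
      IntervalIntegrable g MeasureTheory.volume p q :=
    fun p q hp hpq hq => (hg.mono (Icc_subset_Icc hp hq)).intervalIntegrable_of_Icc hpq
  have left_piece : ∫ z in a..c, g z ≤ ∫ z in a..c, (g a + M * (z - a)) :=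
    integral_mono_on hac (hg_int a c le_rfl hac hcb)
      ((by fun_prop : Continuous fun z => g a + M * (z - a)).intervalIntegrable _ _)
      fun z hz => hleft z ⟨hz.1, hz.2.trans hcb⟩
  have right_piece : ∫ z in c..b, g z ≤ ∫ z in c..b, (g b + M * (b - z)) :=
    integral_mono_on hcb (hg_int c b hac hcb le_rfl)
      ((by fun_prop : Continuous fun z => g b + M * (b - z)).intervalIntegrable _ _)
      fun z hz => hright z ⟨hac.trans hz.1, hz.2⟩
  rw [← integral_add_adjacent_intervals (hg_int a c le_rfl hac hcb) (hg_int c b hac hcb le_rfl)]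
  rw [integral_add_mul_sub_left] at left_piece
  rw [integral_add_mul_sub_right] at right_piece
  have tent_area : g a * (c - a) + M * (c - a) ^ 2 / 2 + (g b * (b - c) + M * (b - c) ^ 2 / 2) =
      (b - a) * (g a + g b) / 2 + (M * (b - a) ^ 2 / 4 - (g b - g a) ^ 2 / (4 * M)) := by
    rw [hc]
    field_simp
    ring
  linarith

/-- Classical Iyengar inequality (1938). -/
theorem iyengar_classical (a b M : ℝ) (g g' : ℝ → ℝ) (hab : a < b) (hM : 0 < M)
    (hderiv : ∀ z ∈ Set.Icc a b, HasDerivAt g (g' z) z)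
    (hbound : ∀ z ∈ Set.Icc a b, |g' z| ≤ M) :
    |(∫ z in a..b, g z) - (b - a) * (g a + g b) / 2| ≤
      M * (b - a) ^ 2 / 4 - (g b - g a) ^ 2 / (4 * M) := by
  have hcont : ContinuousOn g (Icc a b) :=
    fun z hz => (hderiv z hz).continuousAt.continuousWithinAt
  have lipschitz : ∀ x ∈ Icc a b, ∀ y ∈ Icc a b, x ≤ y → |g y - g x| ≤ M * (y - x) :=
    fun x hx y hy hxy => by
      simpa [abs_of_nonneg (sub_nonneg.2 hxy)] using
        (convex_Icc a b).norm_image_sub_le_of_norm_hasDerivWithin_le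
          (fun z hz => (hderiv z hz).hasDerivWithinAt) hbound hx hy
  have ha : a ∈ Icc a b := ⟨le_rfl, hab.le⟩
  have hb : b ∈ Icc a b := ⟨hab.le, le_rfl⟩
  have upper := integral_le_of_le_tent hab.le hM hcont
    (fun z hz => by linarith [(abs_le.mp (lipschitz a ha z hz hz.1)).2])
    (fun z hz => by linarith [(abs_le.mp (lipschitz z hz b hb hz.2)).1])
  have lower := integral_le_of_le_tent (g := fun z => -g z) hab.le hM hcont.neg
    (fun z hz => by linarith [(abs_le.mp (lipschitz a ha z hz hz.1)).1])
    (fun z hz => by linarith [(abs_le.mp (lipschitz z hz b hb hz.2)).2])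
  rw [integral_neg, show (-g b - -g a) ^ 2 = (g b - g a) ^ 2 by ring] at lower
  rw [abs_le]
  constructor <;> linarith
end

section
/- Let a < b, s ∈ [a,b], ρ ≥ 0, α > 0, and let f : [a,b] → ℝ be continuous with |f(t) − c_a| ≤ ρ(t−a)^α for t ∈ [a,s] and |f(t) − c_b| ≤ ρ(b−t)^α for t ∈ [s,b], for constants c_a, c_b. Then |∫_a^b f(t)dt − c_a(s−a) − c_b(b−s)| ≤ (ρ/(α+1))[(s−a)^{α+1} + (b−s)^{α+1}]. -/
/-!
On `[a, s]` the deviation `f - c_a` is dominated by `ρ (t - a)^α`, whose integral is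
`ρ (s - a)^(α+1) / (α + 1)`; on `[s, b]` the same estimate holds after the reflection `t ↦ -t`.
Splitting `∫_a^b f` at `s` and adding the two estimates gives the bound.
-/

open intervalIntegral Set
open MeasureTheory (volume)

theorem integral_rpow_sub_left (a s : ℝ) {α : ℝ} (hα : -1 < α) :
    ∫ t in a..s, (t - a) ^ α = (s - a) ^ (α + 1) / (α + 1) := by
  rw [integral_comp_sub_right (fun x => x ^ α), sub_self, integral_rpow (Or.inl hα),
    Real.zero_rpow (by linarith), sub_zero]

theorem abs_integral_sub_const_mul_le_of_abs_sub_le_rpow_sub_left {f : ℝ → ℝ} {a s c ρ α : ℝ}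
    (hs : a ≤ s) (hα : -1 < α) (hf : IntervalIntegrable f volume a s)
    (hbound : ∀ t ∈ Icc a s, |f t - c| ≤ ρ * (t - a) ^ α) :
    |(∫ t in a..s, f t) - c * (s - a)| ≤ ρ / (α + 1) * (s - a) ^ (α + 1) := by
  have hpow : IntervalIntegrable (fun t => (t - a) ^ α) volume a s := by
    simpa using (intervalIntegrable_rpow' hα (a := 0) (b := s - a)).comp_sub_right a
  calc |(∫ t in a..s, f t) - c * (s - a)| = ‖∫ t in a..s, (f t - c)‖ := by
        rw [integral_sub hf intervalIntegrable_const, integral_const, smul_eq_mul, mul_comm,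
          Real.norm_eq_abs]
    _ ≤ ∫ t in a..s, ρ * (t - a) ^ α :=
        norm_integral_le_of_norm_le hs
          (Filter.Eventually.of_forall fun t ht => hbound t (Ioc_subset_Icc_self ht))
          (hpow.const_mul ρ)
    _ = ρ / (α + 1) * (s - a) ^ (α + 1) := by
        rw [integral_const_mul, integral_rpow_sub_left a s hα]
        ring

theorem abs_integral_sub_const_mul_le_of_abs_sub_le_rpow_sub_right {f : ℝ → ℝ} {s b c ρ α : ℝ}
    (hs : s ≤ b) (hα : -1 < α) (hf : IntervalIntegrable f volume s b)
    (hbound : ∀ t ∈ Icc s b, |f t - c| ≤ ρ * (b - t) ^ α) :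
    |(∫ t in s..b, f t) - c * (b - s)| ≤ ρ / (α + 1) * (b - s) ^ (α + 1) := by
  have hreflect :=
    abs_integral_sub_const_mul_le_of_abs_sub_le_rpow_sub_left (f := fun t => f (-t)) (c := c)
      (ρ := ρ) (neg_le_neg hs) hα ((IntervalIntegrable.iff_comp_neg).mp hf.symm)
      fun t ht => by
        simpa [sub_eq_neg_add, add_comm] using hbound (-t) ⟨le_neg_of_le_neg ht.2, neg_le.mp ht.1⟩
  simpa [integral_comp_neg, sub_eq_neg_add, add_comm] using hreflect

theorem iyengar_core_step_general (a b s ρ α ca cb : ℝ) (f : ℝ → ℝ)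
    (hs : s ∈ Set.Icc a b) (hα : 0 < α)
    (hf : ContinuousOn f (Set.Icc a b))
    (hba : ∀ t ∈ Set.Icc a s, |f t - ca| ≤ ρ * (t - a) ^ α)
    (hbb : ∀ t ∈ Set.Icc s b, |f t - cb| ≤ ρ * (b - t) ^ α) :
    |(∫ t in a..b, f t) - ca * (s - a) - cb * (b - s)| ≤
      ρ / (α + 1) * ((s - a) ^ (α + 1) + (b - s) ^ (α + 1)) := by
  obtain ⟨has, hsb⟩ := hs
  have hfas : IntervalIntegrable f volume a s :=
    (hf.mono (Icc_subset_Icc_right hsb)).intervalIntegrable_of_Icc has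
  have hfsb : IntervalIntegrable f volume s b :=
    (hf.mono (Icc_subset_Icc_left has)).intervalIntegrable_of_Icc hsb
  have hleft :=
    abs_integral_sub_const_mul_le_of_abs_sub_le_rpow_sub_left has (by linarith) hfas hba
  have hright :=
    abs_integral_sub_const_mul_le_of_abs_sub_le_rpow_sub_right hsb (by linarith) hfsb hbb
  rw [← integral_add_adjacent_intervals hfas hfsb, mul_add]
  calc _ = |((∫ t in a..s, f t) - ca * (s - a)) + ((∫ t in s..b, f t) - cb * (b - s))| := by
        congr 1; ring
    _ ≤ _ := (abs_add_le _ _).trans (add_le_add hleft hright)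

/-- Core integration step of Theorem 3.1 in the case n = 1, ψ = id. -/
theorem iyengar_core_step (a b s ρ α ca cb : ℝ) (f : ℝ → ℝ) (hab : a < b)
    (hs : s ∈ Set.Icc a b) (hρ : 0 ≤ ρ) (hα : 0 < α)
    (hf : ContinuousOn f (Set.Icc a b))
    (hba : ∀ t ∈ Set.Icc a s, |f t - ca| ≤ ρ * (t - a) ^ α)
    (hbb : ∀ t ∈ Set.Icc s b, |f t - cb| ≤ ρ * (b - t) ^ α) :
    |(∫ t in a..b, f t) - ca * (s - a) - cb * (b - s)| ≤
      ρ / (α + 1) * ((s - a) ^ (α + 1) + (b - s) ^ (α + 1)) :=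
  iyengar_core_step_general a b s ρ α ca cb f hs hα hf hba hbb
end
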